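/- Let f_n, f ∈ W. Then d(f_n, f) → 0 (with d the metric of the preceding context) if and only if f_n converges almost basically to f. -/

import Mathlib

open MeasureTheory Filter

/-- Right-continuity of a real function. -/
def RightCont (f : ℝ → ℝ) : Prop := ∀ x : ℝ, ContinuousWithinAt f (Set.Ici x) x

/-- The space `W` of right-continuous functions of bounded variation on `ℝ`
which vanish at `-∞`. -/
def MemW (f : ℝ → ℝ) : Prop :=
  RightCont f ∧ BoundedVariationOn f Set.univ ∧ Tendsto f atBot (nhds 0)

/-- The set of admissible `ε ≥ 0` in the definition of the metric `d`: there is a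
constant `c` such that `|f - c - g| ≤ ε` on `[-1/ε, 1/ε]` outside a set of Lebesgue
measure at most `ε` (with the convention `[-1/0, 1/0] = ℝ`). -/
def dSet (f g : ℝ → ℝ) : Set ℝ :=
  {ε : ℝ | 0 ≤ ε ∧ ∃ c : ℝ,
    volume {x : ℝ | x ∈ (if ε = 0 then Set.univ else Set.Icc (-ε⁻¹) ε⁻¹) ∧
        ε < |f x - c - g x|} ≤ ENNReal.ofReal ε}

/-- The metric on `W` metrizing almost basic convergence. -/
noncomputable def dW (f g : ℝ → ℝ) : ℝ := sInf (dSet f g)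

/-- Almost basic convergence: every subsequence has a further subsequence along
which the differences `f_n(x) - f_n(y)` converge to `f(x) - f(y)` for all `x, y`
outside a Lebesgue-null set that may depend on the subsequence. -/
def AlmBasic (F : ℕ → ℝ → ℝ) (f : ℝ → ℝ) : Prop :=
  ∀ φ : ℕ → ℕ, StrictMono φ → ∃ ψ : ℕ → ℕ, StrictMono ψ ∧ ∃ S : Set ℝ,
    volume S = 0 ∧ ∀ x ∉ S, ∀ y ∉ S,
      Tendsto (fun l => F (φ (ψ l)) x - F (φ (ψ l)) y) atTop (nhds (f x - f y))

lemma MemW.measurable {f : ℝ → ℝ} (hf : MemW f) : Measurable f := by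
  obtain ⟨p, q, hp, hq, hpq⟩ :=
    hf.2.1.locallyBoundedVariationOn.exists_monotoneOn_sub_monotoneOn
  rw [hpq]
  exact ((monotoneOn_univ.mp hp).measurable).sub ((monotoneOn_univ.mp hq).measurable)

lemma two_mem_dSet (f g : ℝ → ℝ) : (2 : ℝ) ∈ dSet f g := by
  refine ⟨by norm_num, 0, ?_⟩
  have h1 : {x : ℝ | x ∈ (if (2:ℝ) = 0 then Set.univ else Set.Icc (-(2:ℝ)⁻¹) (2:ℝ)⁻¹) ∧
      (2:ℝ) < |f x - 0 - g x|} ⊆ Set.Icc (-(2:ℝ)⁻¹) (2:ℝ)⁻¹ := by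
    intro x hx; simpa using hx.1
  calc volume _ ≤ volume (Set.Icc (-(2:ℝ)⁻¹) (2:ℝ)⁻¹) := measure_mono h1
    _ ≤ ENNReal.ofReal 2 := by
        rw [Real.volume_Icc]; exact ENNReal.ofReal_le_ofReal (by norm_num)

lemma dW_nonneg (f g : ℝ → ℝ) : 0 ≤ dW f g :=
  Real.sInf_nonneg (fun _ h => h.1)

lemma dW_le {f g : ℝ → ℝ} {ε : ℝ} (h : ε ∈ dSet f g) : dW f g ≤ ε :=
  csInf_le ⟨0, fun _ h => h.1⟩ h

lemma forward (F : ℕ → ℝ → ℝ) (f : ℝ → ℝ)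
    (hd : Tendsto (fun n => dW (F n) f) atTop (nhds 0)) : AlmBasic F f := by
  have hsel : ∀ n : ℕ, ∃ ε ∈ dSet (F n) f, ε < dW (F n) f + (1 / (n + 1) : ℝ) := by
    intro n
    apply exists_lt_of_csInf_lt ⟨2, two_mem_dSet _ _⟩
    have hpos : (0:ℝ) < 1 / (n+1) := by positivity
    exact lt_add_of_pos_right (dW (F n) f) hpos
  choose ε hεmem hεlt using hsel
  have hε0 : ∀ n, 0 ≤ ε n := fun n => (hεmem n).1
  choose c hc using fun n => (hεmem n).2
  have hεtend : Tendsto ε atTop (nhds 0) := by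
    apply squeeze_zero hε0 (fun n => (hεlt n).le)
    simpa using hd.add tendsto_one_div_add_atTop_nhds_zero_nat
  intro φ hφ
  have hεφ : Tendsto (fun k => ε (φ k)) atTop (nhds 0) := hεtend.comp hφ.tendsto_atTop
  have hev : ∀ l : ℕ, ∀ᶠ k in atTop, ε (φ k) ≤ (1/2 : ℝ) ^ l := by
    intro l
    have h2 : (0:ℝ) < (1/2)^l := by positivity
    filter_upwards [hεφ.eventually (gt_mem_nhds h2)] with k hk using hk.le
  obtain ⟨ψ, hψ, hψε⟩ := extraction_forall_of_eventually hev
  set G : ℕ → ℝ → ℝ := fun l => F (φ (ψ l)) with hGdef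
  set E : ℕ → ℝ := fun l => ε (φ (ψ l)) with hEdef
  set C : ℕ → ℝ := fun l => c (φ (ψ l)) with hCdef
  set A : ℕ → Set ℝ := fun l =>
    {x : ℝ | x ∈ (if E l = 0 then Set.univ else Set.Icc (-(E l)⁻¹) (E l)⁻¹) ∧
      E l < |G l x - C l - f x|} with hAdef
  have hAle : ∀ l, volume (A l) ≤ ENNReal.ofReal (E l) := fun l => hc (φ (ψ l))
  have hgeom : ∀ l : ℕ, ENNReal.ofReal ((1/2:ℝ)^l) = (2⁻¹ : ENNReal) ^ l := by
    intro l
    rw [ENNReal.ofReal_pow (by norm_num : (0:ℝ) ≤ 1/2)]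
    congr 1
    rw [one_div, ENNReal.ofReal_inv_of_pos (by norm_num : (0:ℝ) < 2)]
    norm_num
  have hsum : (∑' l, volume (A l)) ≠ ⊤ := by
    apply ne_top_of_le_ne_top _ (ENNReal.tsum_le_tsum (fun l =>
      (hAle l).trans (ENNReal.ofReal_le_ofReal (hψε l))))
    simp_rw [hgeom]
    rw [ENNReal.tsum_geometric, ENNReal.one_sub_inv_two]
    simp
  have hEt : Tendsto E atTop (nhds 0) := by
    apply squeeze_zero (fun l => hε0 _) hψε
    exact tendsto_pow_atTop_nhds_zero_of_lt_one (by norm_num) (by norm_num)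
  refine ⟨ψ, hψ, limsup A atTop, measure_limsup_atTop_eq_zero hsum, ?_⟩
  have key : ∀ z ∉ limsup A atTop,
      Tendsto (fun l => G l z - C l - f z) atTop (nhds 0) := by
    intro z hz
    rw [mem_limsup_iff_frequently_mem, not_frequently] at hz
    have hEz : ∀ᶠ l in atTop, E l < (|z| + 1)⁻¹ := by
      have hp : (0:ℝ) < (|z| + 1)⁻¹ := by positivity
      exact hEt.eventually (gt_mem_nhds hp)
    apply squeeze_zero_norm' _ hEt
    filter_upwards [hz, hEz] with l hAl hEl
    rw [Real.norm_eq_abs]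
    by_contra hcon
    push_neg at hcon
    apply hAl
    refine ⟨?_, hcon⟩
    split_ifs with h0
    · trivial
    · have hpos : 0 < E l := lt_of_le_of_ne (hε0 _) (Ne.symm h0)
      have h1 : |z| + 1 < (E l)⁻¹ := by
        have := inv_strictAnti₀ hpos hEl
        rwa [inv_inv] at this
      have h2 : |z| ≤ (E l)⁻¹ := by linarith
      exact Set.mem_Icc.mpr (abs_le.mp h2)
  intro x hx y hy
  have hx' := key x hx
  have hy' := key y hy
  have h4 : Tendsto (fun l => ((G l x - C l - f x) - (G l y - C l - f y)) + (f x - f y))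
      atTop (nhds (f x - f y)) := by
    simpa using (hx'.sub hy').add_const (f x - f y)
  exact h4.congr (fun l => by ring)

lemma backward (F : ℕ → ℝ → ℝ) (f : ℝ → ℝ) (hF : ∀ n, MemW (F n)) (hf : MemW f)
    (hab : AlmBasic F f) : Tendsto (fun n => dW (F n) f) atTop (nhds 0) := by
  by_contra hcon
  rw [Metric.tendsto_atTop] at hcon
  push_neg at hcon
  obtain ⟨ε, hε, hfreq⟩ := hcon
  obtain ⟨φ, hφ, hφε⟩ := extraction_of_frequently_atTop (frequently_atTop.mpr hfreq)
  obtain ⟨ψ, hψ, S, hS, hconv⟩ := hab φ hφ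
  have hSne : Sᶜ.Nonempty := by
    by_contra h
    rw [Set.not_nonempty_iff_eq_empty, Set.compl_empty_iff] at h
    rw [h, Real.volume_univ] at hS
    exact ENNReal.top_ne_zero hS
  obtain ⟨y₀, hy₀⟩ := hSne
  set δ : ℝ := ε / 2 with hδdef
  have hδpos : 0 < δ := by positivity
  set g : ℕ → ℝ → ℝ := fun l x => F (φ (ψ l)) x - (F (φ (ψ l)) y₀ - f y₀) - f x with hgdef
  set μ := volume.restrict (Set.Icc (-δ⁻¹) δ⁻¹) with hμdef
  have hfin : IsFiniteMeasure μ :=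
    ⟨by rw [hμdef, Measure.restrict_apply_univ]; exact measure_Icc_lt_top⟩
  have hmeas : ∀ l, AEStronglyMeasurable (g l) μ := fun l =>
    ((((hF _).measurable).sub measurable_const).sub hf.measurable).aestronglyMeasurable
  have hae : ∀ᵐ x ∂μ, Tendsto (fun l => g l x) atTop (nhds 0) := by
    have hnull : μ S = 0 := by
      have hle : μ S ≤ volume S := Measure.le_iff'.mp (Measure.restrict_le_self) S
      exact le_antisymm (hle.trans hS.le) (zero_le)
    rw [ae_iff]
    apply measure_mono_null _ hnull
    intro x hx
    by_contra hxS
    apply hx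
    have h1 := (hconv x hxS y₀ hy₀).sub_const (f x - f y₀)
    have h2 : Tendsto (fun l => (F (φ (ψ l)) x - F (φ (ψ l)) y₀) - (f x - f y₀))
        atTop (nhds 0) := by simpa using h1
    exact h2.congr (fun l => by simp only [hgdef]; ring)
  have htim := tendstoInMeasure_of_tendsto_ae hmeas hae
  have h1 := tendstoInMeasure_iff_dist.mp htim δ hδpos
  have h2 : ∀ᶠ l in atTop, μ {x | δ ≤ dist (g l x) 0} < ENNReal.ofReal δ :=
    h1.eventually (gt_mem_nhds (ENNReal.ofReal_pos.mpr hδpos))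
  obtain ⟨l, hl⟩ := h2.exists
  have hmem : δ ∈ dSet (F (φ (ψ l))) f := by
    refine ⟨hδpos.le, F (φ (ψ l)) y₀ - f y₀, ?_⟩
    rw [if_neg hδpos.ne']
    have hsub : {x : ℝ | x ∈ Set.Icc (-δ⁻¹) δ⁻¹ ∧
        δ < |F (φ (ψ l)) x - (F (φ (ψ l)) y₀ - f y₀) - f x|}
        ⊆ {x | δ ≤ dist (g l x) 0} ∩ Set.Icc (-δ⁻¹) δ⁻¹ := by
      intro x hx
      refine ⟨?_, hx.1⟩
      rw [Set.mem_setOf_eq, Real.dist_eq, sub_zero]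
      exact hx.2.le
    calc volume _ ≤ volume ({x | δ ≤ dist (g l x) 0} ∩ Set.Icc (-δ⁻¹) δ⁻¹) :=
          measure_mono hsub
      _ = μ {x | δ ≤ dist (g l x) 0} := by
          rw [hμdef, Measure.restrict_apply' measurableSet_Icc]
      _ ≤ ENNReal.ofReal δ := hl.le
  have hle : dW (F (φ (ψ l))) f ≤ δ := dW_le hmem
  have hge : ε ≤ dW (F (φ (ψ l))) f := by
    have := hφε (ψ l)
    rwa [Real.dist_eq, sub_zero, abs_of_nonneg (dW_nonneg _ _)] at this
  linarith


/-- For `f_n, f ∈ W`, `d(f_n, f) → 0` if and only if `f_n` converges almost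
basically to `f`. -/
theorem stmt9 (F : ℕ → ℝ → ℝ) (f : ℝ → ℝ) (hF : ∀ n, MemW (F n)) (hf : MemW f) :
    Tendsto (fun n => dW (F n) f) atTop (nhds 0) ↔ AlmBasic F f := by
  exact ⟨fun h => forward F f h, fun h => backward F f hF hf h⟩
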